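/- Let u_i, u_{i+1}, u_j, u_{j+1} ∈ S² be in general position (any three linearly independent). The open minor spherical arc from u_i to u_{i+1} intersects the antipodal image of the arc from u_j to u_{j+1} (equivalently, the arc from −u_j to −u_{j+1}) if and only if the four points {u_i, u_{i+1}, u_j, u_{j+1}} are in balanced position, i.e., not contained in any closed hemisphere. Equivalently, this happens if and only if [u_i,u_{i+1},u_j] ≃ [u_i,u_j,u_{j+1}] and both are of sign opposite to [u_i,u_{i+1},u_{j+1}] ≃ [u_{i+1},u_j,u_{j+1}]. -/

import Mathlib

open Matrix

noncomputable section

/-- Determinant of the 3×3 matrix with columns `u`, `v`, `w`. -/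
def det3 (u v w : Fin 3 → ℝ) : ℝ :=
  Matrix.det !![u 0, v 0, w 0; u 1, v 1, w 1; u 2, v 2, w 2]

/-- `u` lies on the unit sphere S². -/
def onSphere (u : Fin 3 → ℝ) : Prop := u ⬝ᵥ u = 1

/-- `X` is contained in some closed hemisphere. -/
def InClosedHemisphere (X : Set (Fin 3 → ℝ)) : Prop :=
  ∃ n : Fin 3 → ℝ, n ⬝ᵥ n = 1 ∧ ∀ x ∈ X, 0 ≤ n ⬝ᵥ x

/-- `X` is balanced: not contained in any closed hemisphere. -/
def BalancedSet (X : Set (Fin 3 → ℝ)) : Prop := ¬ InClosedHemisphere X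

/-- Radial projection to the unit sphere. -/
def normalize3 (x : Fin 3 → ℝ) : Fin 3 → ℝ := (Real.sqrt (x ⬝ᵥ x))⁻¹ • x

/-- The open minor geodesic arc from `u` to `v` (endpoints excluded). -/
def openArc (u v : Fin 3 → ℝ) : Set (Fin 3 → ℝ) :=
  {x | ∃ s t : ℝ, 0 < s ∧ 0 < t ∧ x = normalize3 (s • u + t • v)}

/-- The closed minor geodesic arc from `u` to `v`. -/
def closedArc (u v : Fin 3 → ℝ) : Set (Fin 3 → ℝ) :=
  {x | ∃ s t : ℝ, 0 ≤ s ∧ 0 ≤ t ∧ 0 < s + t ∧ x = normalize3 (s • u + t • v)}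

/-!
A point of `openArc a b ∩ -openArc c d` is a common direction `s a + t b = -λ (s' c + t' d)` with
all coefficients positive, i.e. a positive linear dependence `α a + β b + γ c + δ d = 0`.
When `a, b, c` is a basis, Cramer's rule shows that the dependence is unique up to scale, with
coefficients proportional to `(-[b,c,d], [a,c,d], -[a,b,d], [a,b,c])`; this turns positivity into
the sign conditions. A positive dependence forbids a closed hemisphere (pairing it with the pole
forces the pole to be orthogonal to a basis), and conversely when one coefficient has the wrong
sign, the plane through the other two of `a, b, c` bounds a closed hemisphere containing all four
points.
-/

def cross3 (u v : Fin 3 → ℝ) : Fin 3 → ℝ :=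
  ![u 1 * v 2 - u 2 * v 1, u 2 * v 0 - u 0 * v 2, u 0 * v 1 - u 1 * v 0]

lemma det3_eq (u v w : Fin 3 → ℝ) : det3 u v w =
    u 0 * v 1 * w 2 - u 0 * v 2 * w 1 - u 1 * v 0 * w 2 + u 1 * v 2 * w 0 +
      u 2 * v 0 * w 1 - u 2 * v 1 * w 0 := by
  simp [det3, det_fin_three]; ring

lemma cross3_dotProduct (u v w : Fin 3 → ℝ) : cross3 u v ⬝ᵥ w = det3 w u v := by
  simp [cross3, det3_eq, dotProduct, Fin.sum_univ_three]; ring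

lemma det3_rotate (u v w : Fin 3 → ℝ) : det3 u v w = det3 w u v := by
  rw [det3_eq, det3_eq]; ring

lemma det3_swap (u v w : Fin 3 → ℝ) : det3 u v w = -det3 u w v := by
  rw [det3_eq, det3_eq]; ring

@[simp]
lemma det3_self_left (u v : Fin 3 → ℝ) : det3 u u v = 0 := by
  rw [det3_eq]; ring

@[simp]
lemma det3_self_right (u v : Fin 3 → ℝ) : det3 u v u = 0 := by
  rw [det3_eq]; ring

lemma det3_ne_zero_of_linearIndependent {a b c : Fin 3 → ℝ}
    (h : LinearIndependent ℝ ![a, b, c]) : det3 a b c ≠ 0 := by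
  have hdet : det3 a b c = (Matrix.of ![a, b, c]).det := by
    simp [det3, det_fin_three]; ring
  rw [hdet]
  exact ((isUnit_iff_isUnit_det _).mp (linearIndependent_rows_iff_isUnit.mp h)).ne_zero

lemma det3_smul_eq (a b c d : Fin 3 → ℝ) :
    det3 a b c • d = det3 b c d • a - det3 a c d • b + det3 a b d • c := by
  funext i
  fin_cases i <;> (simp [det3_eq]; ring)

lemma det3_mul_eq_of_smul_add_eq_zero {a b c d : Fin 3 → ℝ} {α β γ δ : ℝ}
    (h : α • a + β • b + γ • c + δ • d = 0) :
    α * det3 a b c = -(δ * det3 b c d) ∧ β * det3 a b c = δ * det3 a c d ∧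
      γ * det3 a b c = -(δ * det3 a b d) := by
  have pair (u v : Fin 3 → ℝ) :
      α * det3 a u v + β * det3 b u v + γ * det3 c u v + δ * det3 d u v = 0 := by
    simpa [dotProduct_add, cross3_dotProduct] using congrArg (cross3 u v ⬝ᵥ ·) h
  have hbc := pair b c
  have hca := pair c a
  have hab := pair a b
  simp only [det3_eq] at hbc hca hab ⊢
  exact ⟨by linear_combination hbc, by linear_combination hca, by linear_combination hab⟩

lemma dotProduct_self_pos {n : Type*} [Fintype n] {v : n → ℝ} (hv : v ≠ 0) : 0 < v ⬝ᵥ v :=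
  (Finset.sum_nonneg fun i _ => mul_self_nonneg (v i)).lt_of_ne
    (Ne.symm (dotProduct_self_eq_zero.not.mpr hv))

lemma eq_zero_of_dotProduct_eq_zero {a b c n : Fin 3 → ℝ} (hD : det3 a b c ≠ 0)
    (ha : n ⬝ᵥ a = 0) (hb : n ⬝ᵥ b = 0) (hc : n ⬝ᵥ c = 0) : n = 0 := by
  have := congrArg (n ⬝ᵥ ·) (det3_smul_eq a b c n)
  simp only [dotProduct_smul, dotProduct_add, dotProduct_sub, ha, hb, hc, smul_eq_mul,
    mul_zero, sub_zero, add_zero] at this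
  exact dotProduct_self_eq_zero.mp ((mul_eq_zero.mp this).resolve_left hD)

lemma normalize3_neg (v : Fin 3 → ℝ) : normalize3 (-v) = -normalize3 v := by
  simp [normalize3]

lemma sqrt_smul_normalize3 (v : Fin 3 → ℝ) : Real.sqrt (v ⬝ᵥ v) • normalize3 v = v := by
  rcases eq_or_ne v 0 with rfl | hv
  · simp
  · rw [normalize3, smul_smul, mul_inv_cancel₀ (Real.sqrt_pos.mpr (dotProduct_self_pos hv)).ne',
      one_smul]

lemma normalize3_dotProduct_self {v : Fin 3 → ℝ} (hv : v ≠ 0) :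
    normalize3 v ⬝ᵥ normalize3 v = 1 := by
  have hpos := dotProduct_self_pos hv
  simp only [normalize3, smul_dotProduct, dotProduct_smul, smul_eq_mul]
  rw [← mul_assoc, ← mul_inv, Real.mul_self_sqrt hpos.le, inv_mul_cancel₀ hpos.ne']

lemma exists_pos_smul_of_normalize3_eq {u v : Fin 3 → ℝ} (hu : u ≠ 0) (hv : v ≠ 0)
    (h : normalize3 u = normalize3 v) : ∃ r : ℝ, 0 < r ∧ u = r • v := by
  have hr := mul_pos (Real.sqrt_pos.mpr (dotProduct_self_pos hu))
    (inv_pos.mpr (Real.sqrt_pos.mpr (dotProduct_self_pos hv)))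
  refine ⟨_, hr, ?_⟩
  calc u = Real.sqrt (u ⬝ᵥ u) • normalize3 u := (sqrt_smul_normalize3 u).symm
    _ = _ := by rw [h, normalize3, smul_smul]

lemma inClosedHemisphere_of_dotProduct_nonneg {X : Set (Fin 3 → ℝ)} {m : Fin 3 → ℝ}
    (hm : m ≠ 0) (h : ∀ x ∈ X, 0 ≤ m ⬝ᵥ x) : InClosedHemisphere X := by
  refine ⟨normalize3 m, normalize3_dotProduct_self hm, fun x hx => ?_⟩
  rw [normalize3, smul_dotProduct, smul_eq_mul]
  exact mul_nonneg (inv_nonneg.2 (Real.sqrt_nonneg _)) (h x hx)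

/-- The closed half-space bounded by the plane through `u, v` on the side of `w`. -/
lemma inClosedHemisphere_of_det3_mul_nonneg {X : Set (Fin 3 → ℝ)} {u v w : Fin 3 → ℝ}
    (hw : det3 w u v ≠ 0) (h : ∀ x ∈ X, 0 ≤ det3 w u v * det3 x u v) :
    InClosedHemisphere X := by
  have hm : ∀ x, (det3 w u v • cross3 u v) ⬝ᵥ x = det3 w u v * det3 x u v := fun x => by
    rw [smul_dotProduct, cross3_dotProduct, smul_eq_mul]
  refine inClosedHemisphere_of_dotProduct_nonneg (m := det3 w u v • cross3 u v) ?_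
    fun x hx => (hm x).symm ▸ h x hx
  intro h0
  have := hm w
  rw [h0, zero_dotProduct] at this
  exact hw (mul_self_eq_zero.mp this.symm)

def PositivelyDependent (a b c d : Fin 3 → ℝ) : Prop :=
  ∃ α β γ δ : ℝ, 0 < α ∧ 0 < β ∧ 0 < γ ∧ 0 < δ ∧ α • a + β • b + γ • c + δ • d = 0

section

variable {a b c d : Fin 3 → ℝ}

lemma openArc_inter_neg_nonempty_iff (hab : LinearIndependent ℝ ![a, b])
    (hcd : LinearIndependent ℝ ![c, d]) :
    (openArc a b ∩ (Neg.neg '' openArc c d)).Nonempty ↔ PositivelyDependent a b c d := by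
  have hne {u v : Fin 3 → ℝ} (huv : LinearIndependent ℝ ![u, v]) {s t : ℝ} (hs : 0 < s) :
      s • u + t • v ≠ 0 := fun h0 => hs.ne' (LinearIndependent.pair_iff.mp huv s t h0).1
  constructor
  · rintro ⟨_, ⟨s, t, hs, ht, rfl⟩, _, ⟨s', t', hs', ht', rfl⟩, hpq⟩
    rw [← normalize3_neg] at hpq
    obtain ⟨r, hr, hrel⟩ := exists_pos_smul_of_normalize3_eq (hne hab hs)
      (neg_ne_zero.mpr (hne hcd hs')) hpq.symm
    refine ⟨s, t, r * s', r * t', hs, ht, mul_pos hr hs', mul_pos hr ht', ?_⟩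
    rw [hrel]
    module
  · rintro ⟨α, β, γ, δ, hα, hβ, hγ, hδ, hsum⟩
    refine ⟨normalize3 (α • a + β • b), ⟨α, β, hα, hβ, rfl⟩,
      normalize3 (γ • c + δ • d), ⟨γ, δ, hγ, hδ, rfl⟩, ?_⟩
    have hneg : -(γ • c + δ • d) = α • a + β • b :=
      neg_eq_iff_add_eq_zero.mpr (by rw [← hsum]; abel)
    rw [← normalize3_neg, hneg]

lemma positivelyDependent_iff_det3 (hD : det3 a b c ≠ 0) :
    PositivelyDependent a b c d ↔
      0 < det3 a b c * det3 a c d ∧ 0 < det3 a b d * det3 b c d ∧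
        det3 a b c * det3 a b d < 0 := by
  have hD2 : 0 < det3 a b c * det3 a b c := mul_self_pos.mpr hD
  constructor
  · rintro ⟨α, β, γ, δ, hα, hβ, hγ, hδ, h⟩
    obtain ⟨hα', hβ', hγ'⟩ := det3_mul_eq_of_smul_add_eq_zero h
    refine ⟨?_, ?_, ?_⟩
    · have : δ * (det3 a b c * det3 a c d) = β * (det3 a b c * det3 a b c) := by
        linear_combination (-det3 a b c) * hβ'
      nlinarith [mul_pos hβ hD2]
    · have : (δ * det3 a b d) * (δ * det3 b c d) = (γ * α) * (det3 a b c * det3 a b c) := by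
        linear_combination (δ * det3 b c d) * hγ' - (γ * det3 a b c) * hα'
      nlinarith [mul_pos (mul_pos hγ hα) hD2, mul_pos hδ hδ]
    · have : δ * (det3 a b c * det3 a b d) = -(γ * (det3 a b c * det3 a b c)) := by
        linear_combination (det3 a b c) * hγ'
      nlinarith [mul_pos hγ hD2]
  · rintro ⟨hacd, habd_bcd, habd⟩
    have hbcd : det3 a b c * det3 b c d < 0 := by nlinarith [mul_pos hD2 habd_bcd]
    refine ⟨-(det3 a b c * det3 b c d), det3 a b c * det3 a c d, -(det3 a b c * det3 a b d),
      det3 a b c * det3 a b c, by linarith, hacd, by linarith, hD2, ?_⟩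
    have := congrArg (det3 a b c • ·) (det3_smul_eq a b c d)
    simp only [smul_add, smul_sub, smul_smul] at this
    rw [this]
    module

lemma PositivelyDependent.balancedSet (hD : det3 a b c ≠ 0) (h : PositivelyDependent a b c d) :
    BalancedSet {a, b, c, d} := by
  rintro ⟨n, hn, hX⟩
  obtain ⟨α, β, γ, δ, hα, hβ, hγ, hδ, hsum⟩ := h
  have ha := hX a (by simp)
  have hb := hX b (by simp)
  have hc := hX c (by simp)
  have hd := hX d (by simp)
  have hpair : α * (n ⬝ᵥ a) + β * (n ⬝ᵥ b) + γ * (n ⬝ᵥ c) + δ * (n ⬝ᵥ d) = 0 := by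
    simpa [dotProduct_add, dotProduct_smul] using congrArg (n ⬝ᵥ ·) hsum
  have hn0 : n = 0 := eq_zero_of_dotProduct_eq_zero hD
    (by nlinarith [mul_nonneg hβ.le hb, mul_nonneg hγ.le hc, mul_nonneg hδ.le hd])
    (by nlinarith [mul_nonneg hα.le ha, mul_nonneg hγ.le hc, mul_nonneg hδ.le hd])
    (by nlinarith [mul_nonneg hα.le ha, mul_nonneg hβ.le hb, mul_nonneg hδ.le hd])
  simp [hn0] at hn

lemma inClosedHemisphere_of_not_positivelyDependent (hD : det3 a b c ≠ 0)
    (h : ¬ PositivelyDependent a b c d) : InClosedHemisphere {a, b, c, d} := by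
  have hD2 : 0 ≤ det3 a b c * det3 a b c := mul_self_nonneg _
  rw [positivelyDependent_iff_det3 hD] at h
  by_cases hbcd : 0 ≤ det3 a b c * det3 b c d
  · refine inClosedHemisphere_of_det3_mul_nonneg (u := b) (v := c) (w := a) hD ?_
    rintro x (rfl | rfl | rfl | rfl)
    · exact hD2
    · simp
    · simp
    · rwa [det3_rotate x b c, det3_rotate c x b]
  by_cases habd : 0 ≤ det3 a b c * det3 a b d
  · have hD' : det3 c a b ≠ 0 := by rwa [← det3_rotate a b c]
    refine inClosedHemisphere_of_det3_mul_nonneg (u := a) (v := b) (w := c) hD' ?_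
    rintro x (rfl | rfl | rfl | rfl)
    · simp
    · simp
    · exact mul_self_nonneg _
    · rwa [← det3_rotate a b c, ← det3_rotate a b x]
  by_cases hacd : det3 a b c * det3 a c d ≤ 0
  · have hD' : det3 b c a ≠ 0 := by rwa [det3_rotate b c a]
    refine inClosedHemisphere_of_det3_mul_nonneg (u := c) (v := a) (w := b) hD' ?_
    rintro x (rfl | rfl | rfl | rfl)
    · simp
    · exact mul_self_nonneg _
    · simp
    · rw [det3_rotate b c a, det3_rotate x c a, det3_swap a x c]
      linarith
  exfalso
  exact h ⟨by linarith, by nlinarith, by linarith⟩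

end

theorem arc_meets_antipodal_arc_iff_general (a b c d : Fin 3 → ℝ)
    (habc : LinearIndependent ℝ ![a, b, c])
    (hacd : LinearIndependent ℝ ![a, c, d]) :
    ((openArc a b ∩ (Neg.neg '' openArc c d)).Nonempty ↔ BalancedSet {a, b, c, d}) ∧
    ((openArc a b ∩ (Neg.neg '' openArc c d)).Nonempty ↔
      (0 < det3 a b c * det3 a c d ∧ 0 < det3 a b d * det3 b c d ∧
        det3 a b c * det3 a b d < 0)) := by
  have hD := det3_ne_zero_of_linearIndependent habc
  have hab : LinearIndependent ℝ ![a, b] := by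
    convert habc.comp ![0, 1] (by decide) using 1
    ext i : 1
    fin_cases i <;> rfl
  have hArc := openArc_inter_neg_nonempty_iff hab (linearIndependent_finCons.mp hacd).1
  have hBalanced : BalancedSet {a, b, c, d} ↔ PositivelyDependent a b c d :=
    ⟨not_imp_comm.mp (inClosedHemisphere_of_not_positivelyDependent hD),
      PositivelyDependent.balancedSet hD⟩
  exact ⟨hArc.trans hBalanced.symm, hArc.trans (positivelyDependent_iff_det3 hD)⟩

theorem arc_meets_antipodal_arc_iff (a b c d : Fin 3 → ℝ)
    (ha : onSphere a) (hb : onSphere b) (hc : onSphere c) (hd : onSphere d)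
    (habc : LinearIndependent ℝ ![a, b, c])
    (habd : LinearIndependent ℝ ![a, b, d])
    (hacd : LinearIndependent ℝ ![a, c, d])
    (hbcd : LinearIndependent ℝ ![b, c, d]) :
    ((openArc a b ∩ (Neg.neg '' openArc c d)).Nonempty ↔ BalancedSet {a, b, c, d}) ∧
    ((openArc a b ∩ (Neg.neg '' openArc c d)).Nonempty ↔
      (0 < det3 a b c * det3 a c d ∧ 0 < det3 a b d * det3 b c d ∧
        det3 a b c * det3 a b d < 0)) :=
  arc_meets_antipodal_arc_iff_general a b c d habc hacd
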